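/- arXiv:math/0309060 — 2 statements merged into one kernel-verified Lean document; each statement's English description precedes it below -/
import Mathlib

section
/- If the distribution fractions α₁, α₂ in a merge model satisfy α₁+α₂=1, α₁,α₂≥0, the flows are q₁=α₁q, q₂=α₂q with q=min{D₁+D₂,S_d}, the constraints α₁q≤D₁ and α₂q≤D₂ hold for all S_d≥0, and α₁,α₂ are independent of S_d, then α₁=D₁/(D₁+D₂) and α₂=D₂/(D₁+D₂). -/
/-- If the distribution fractions `α₁, α₂` in a merge model satisfy `α₁+α₂=1`,
`α₁,α₂ ≥ 0`, the flows are `q₁ = α₁ q`, `q₂ = α₂ q` with `q = min (D₁+D₂) S_d`,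
the constraints `α₁ q ≤ D₁` and `α₂ q ≤ D₂` hold for all `S_d ≥ 0`, and
`α₁, α₂` are independent of `S_d`, then `α₁ = D₁/(D₁+D₂)` and `α₂ = D₂/(D₁+D₂)`. -/
theorem merge_fair_fractions_unique
    (D₁ D₂ : ℝ) (hD₁ : 0 < D₁) (hD₂ : 0 < D₂)
    (α₁ α₂ : ℝ) (hsum : α₁ + α₂ = 1) (h₁ : 0 ≤ α₁) (h₂ : 0 ≤ α₂)
    (hconstr : ∀ Sd : ℝ, 0 ≤ Sd →
      α₁ * min (D₁ + D₂) Sd ≤ D₁ ∧ α₂ * min (D₁ + D₂) Sd ≤ D₂) :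
    α₁ = D₁ / (D₁ + D₂) ∧ α₂ = D₂ / (D₁ + D₂) := by
  have hpos : 0 < D₁ + D₂ := by linarith
  obtain ⟨c₁, c₂⟩ := hconstr (D₁ + D₂) (le_of_lt hpos)
  rw [min_self] at c₁ c₂
  have e₁ : α₁ * (D₁ + D₂) = D₁ := by nlinarith
  constructor
  · field_simp
    linarith [e₁]
  · field_simp
    nlinarith
end

section
/- In the mixed-traffic model, if left and right states (ρ₁ˡ,ρ₂ˡ), (ρ₁ʳ,ρ₂ʳ) with ρ₁ˡ,ρ₁ʳ>0 are connected by a discontinuity satisfying the Rankine-Hugoniot conditions s(ρᵢˡ−ρᵢʳ)=ρᵢˡVˡ−ρᵢʳVʳ for i=1,2, then either Vˡ=Vʳ (a contact discontinuity) or ρ₁ˡρ₂ʳ=ρ₁ʳρ₂ˡ (the composition ρ₂/ρ₁ is preserved across the shock). -/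
/-- In the mixed-traffic model, if left and right states with `ρ₁ˡ, ρ₁ʳ > 0`
are connected by a discontinuity satisfying the Rankine–Hugoniot conditions,
then either `Vˡ = Vʳ` (a contact discontinuity) or `ρ₁ˡ ρ₂ʳ = ρ₁ʳ ρ₂ˡ`
(the composition `ρ₂/ρ₁` is preserved across the shock). -/
theorem mixed_traffic_RH_dichotomy
    (V : ℝ → ℝ → ℝ) (ρ₁l ρ₂l ρ₁r ρ₂r s : ℝ)
    (h₁l : 0 < ρ₁l) (h₁r : 0 < ρ₁r)
    (RH₁ : s * (ρ₁l - ρ₁r) = ρ₁l * V ρ₁l ρ₂l - ρ₁r * V ρ₁r ρ₂r)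
    (RH₂ : s * (ρ₂l - ρ₂r) = ρ₂l * V ρ₁l ρ₂l - ρ₂r * V ρ₁r ρ₂r) :
    V ρ₁l ρ₂l = V ρ₁r ρ₂r ∨ ρ₁l * ρ₂r = ρ₁r * ρ₂l := by
  set Vl := V ρ₁l ρ₂l
  set Vr := V ρ₁r ρ₂r
  by_cases hD : ρ₁l * ρ₂r - ρ₁r * ρ₂l = 0
  · right; linarith
  · left
    have h1 : s * (ρ₁l * ρ₂r - ρ₁r * ρ₂l) = Vl * (ρ₁l * ρ₂r - ρ₁r * ρ₂l) := by
      linear_combination ρ₂r * RH₁ - ρ₁r * RH₂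
    have h2 : s * (ρ₁l * ρ₂r - ρ₁r * ρ₂l) = Vr * (ρ₁l * ρ₂r - ρ₁r * ρ₂l) := by
      linear_combination ρ₂l * RH₁ - ρ₁l * RH₂
    have := h1.symm.trans h2
    exact mul_right_cancel₀ hD this
end
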